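/- Fix an integer k ≥ 2. For all ℓ ≥ 1 and n ≥ 1, the numbers f_ℓ(n) of row-convex k-omino towers of n blocks over a platform of width ℓk satisfy the recurrence f_ℓ(n) = Σ_{i=1}^{ℓ+1} ((ℓ + 2 − i)k − 1) · f_i(n − i), where f_i(0) = 1 and f_i(n − i) is interpreted as 0 when n − i < 0. -/
import Mathlib


/-- A block: a rectangle of width `width` and height 1, whose leftmost cell is in
column `left` and whose row is `height`. -/
structure Blk where
  left : ℤ
  height : ℕ
  width : ℕ
deriving DecidableEq

/-- The set of columns occupied by a block. -/
def Blk.colsSet (b : Blk) : Set ℤ := Set.Ico b.left (b.left + b.width)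

/-- The set of cells occupied by a block. -/
def Blk.cells (b : Blk) : Set (ℤ × ℕ) := b.colsSet ×ˢ ({b.height} : Set ℕ)

/-- The blocks of a configuration occupy pairwise disjoint cells. -/
def disjointCells (T : Finset Blk) : Prop :=
  (T : Set Blk).Pairwise fun a b => Disjoint a.cells b.cells

/-- Every block at height `h + 1` shares a column with some block at height `h`. -/
def supported (T : Finset Blk) : Prop :=
  ∀ b ∈ T, ∀ h : ℕ, b.height = h + 1 →
    ∃ b' ∈ T, b'.height = h ∧ ∃ x : ℤ, x ∈ b.colsSet ∧ x ∈ b'.colsSet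

/-- The set of columns occupied by the blocks of `T` at height `h`. -/
def colsAt (T : Finset Blk) (h : ℕ) : Set ℤ :=
  {x | ∃ b ∈ T, b.height = h ∧ x ∈ b.colsSet}

/-- Every row is convex: at each height, the set of occupied columns is an interval. -/
def rowConvex (T : Finset Blk) : Prop :=
  ∀ h : ℕ, ∀ x y z : ℤ, x ∈ colsAt T h → z ∈ colsAt T h → x ≤ y → y ≤ z →
    y ∈ colsAt T h

/-- A row-convex `k`-omino tower over a platform of width `ℓk`: a finite, possibly
empty, collection of pairwise disjoint blocks of width `k`, every row convex, every
block at height `h ≥ 1` sharing a column with some block at height `h − 1`, and every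
block at height `0` sharing a column with the platform `{0, 1, …, ℓk − 1}`.
Configurations are not identified up to translation. -/
def IsPlatformRC (k ℓ : ℕ) (T : Finset Blk) : Prop :=
  (∀ b ∈ T, b.width = k) ∧ disjointCells T ∧ supported T ∧ rowConvex T ∧
    ∀ b ∈ T, b.height = 0 → ∃ x : ℤ, x ∈ b.colsSet ∧ 0 ≤ x ∧ x < (ℓ * k : ℤ)

/-- `f_ℓ(n)`: the number of row-convex `k`-omino towers of `n` blocks over a platform
of width `ℓk`. -/
noncomputable def fPlatform (k ℓ n : ℕ) : ℕ :=
  Nat.card {T : Finset Blk // IsPlatformRC k ℓ T ∧ T.card = n}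
namespace RC

lemma mem_colsSet {b : Blk} {x : ℤ} : x ∈ b.colsSet ↔ b.left ≤ x ∧ x < b.left + b.width :=
  Set.mem_Ico

lemma disjoint_cells_iff {b b' : Blk} :
    Disjoint b.cells b'.cells ↔
      b.height ≠ b'.height ∨ b.width = 0 ∨ b'.width = 0 ∨
        b.left + b.width ≤ b'.left ∨ b'.left + b'.width ≤ b.left := by
  rw [Set.disjoint_left]
  constructor
  · intro h
    by_contra hc
    push_neg at hc
    obtain ⟨h1, h2, h3, h4, h5⟩ := hc
    have hx : ((max b.left b'.left, b.height) : ℤ × ℕ) ∈ b.cells := by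
      simp [Blk.cells, Blk.colsSet]
      omega
    have hx' : ((max b.left b'.left, b.height) : ℤ × ℕ) ∈ b'.cells := by
      simp [Blk.cells, Blk.colsSet, h1]
      omega
    exact h hx hx'
  · intro h p hp hp'
    obtain ⟨x, y⟩ := p
    simp [Blk.cells, Blk.colsSet] at hp hp'
    omega

def stdRow (k : ℕ) (a : ℤ) (i : ℕ) : Finset Blk :=
  (Finset.range i).image fun j : ℕ => ⟨a + (j : ℤ) * k, 0, k⟩

lemma mem_stdRow {k : ℕ} {a : ℤ} {i : ℕ} {b : Blk} :
    b ∈ stdRow k a i ↔ ∃ j < i, b = ⟨a + (j : ℤ) * k, 0, k⟩ := by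
  simp [stdRow, eq_comm]

lemma card_stdRow {k : ℕ} (hk : 1 ≤ k) (a : ℤ) (i : ℕ) : (stdRow k a i).card = i := by
  rw [stdRow, Finset.card_image_of_injOn, Finset.card_range]
  intro x _ y _ hxy
  simp only [Blk.mk.injEq] at hxy
  have h : (x : ℤ) * k = y * k := by linarith [hxy.1]
  have hk0 : (k : ℤ) ≠ 0 := by exact_mod_cast Nat.one_le_iff_ne_zero.1 hk
  exact_mod_cast mul_right_cancel₀ hk0 h

lemma stdRow_one {k : ℕ} {a : ℤ} : stdRow k a 1 = {(⟨a, 0, k⟩ : Blk)} := by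
  ext b
  simp [mem_stdRow, Nat.lt_one_iff]

lemma stdRow_succ {k : ℕ} {a : ℤ} {i : ℕ} :
    stdRow k a (i + 1) = insert (⟨a, 0, k⟩ : Blk) (stdRow k (a + k) i) := by
  ext b
  simp only [mem_stdRow, Finset.mem_insert]
  constructor
  · rintro ⟨j, hj, rfl⟩
    cases j with
    | zero => left; simp
    | succ j' =>
      right
      refine ⟨j', by omega, ?_⟩
      simp only [Blk.mk.injEq, and_true]
      push_cast
      ring
  · rintro (rfl | ⟨j, hj, rfl⟩)
    · exact ⟨0, by omega, by simp⟩
    · refine ⟨j + 1, by omega, ?_⟩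
      simp only [Blk.mk.injEq, and_true]
      push_cast
      ring

lemma row_structure (k : ℕ) (hk : 1 ≤ k) :
    ∀ (n : ℕ) (B : Finset Blk), B.card = n →
    (∀ b ∈ B, b.width = k) → (∀ b ∈ B, b.height = 0) →
    ((B : Set Blk).Pairwise fun a b => Disjoint a.cells b.cells) →
    (∀ x y z : ℤ, (∃ b ∈ B, x ∈ b.colsSet) → (∃ b ∈ B, z ∈ b.colsSet) →
        x ≤ y → y ≤ z → ∃ b ∈ B, y ∈ b.colsSet) →
    ∃ a : ℤ, B = stdRow k a n := by
  intro n
  induction n with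
  | zero =>
    intro B hc _ _ _ _
    exact ⟨0, by simpa [stdRow] using Finset.card_eq_zero.1 hc⟩
  | succ n ih =>
    intro B hc hw hh hd hconv
    have hne : B.Nonempty := Finset.card_pos.1 (by omega)
    have hLne : (B.image Blk.left).Nonempty := hne.image _
    set a := (B.image Blk.left).min' hLne with ha
    obtain ⟨b0, hb0B, hb0l⟩ := Finset.mem_image.1 ((B.image Blk.left).min'_mem hLne)
    have hb0 : b0 = ⟨a, 0, k⟩ := by
      have h1 := hw b0 hb0B
      have h2 := hh b0 hb0B
      cases b0
      simp only [Blk.mk.injEq]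
      exact ⟨hb0l.trans ha.symm, h2, h1⟩
    have hmin : ∀ b ∈ B, a ≤ b.left := fun b hb =>
      Finset.min'_le _ _ (Finset.mem_image_of_mem _ hb)
    set B' := B.erase b0 with hB'
    have hB'sub : B' ⊆ B := Finset.erase_subset _ _
    have hB'card : B'.card = n := by
      rw [hB', Finset.card_erase_of_mem hb0B, hc]
      omega
    have hfar : ∀ b ∈ B', a + k ≤ b.left := by
      intro b hb
      have hbB := hB'sub hb
      have hne' : b0 ≠ b := fun h => (Finset.ne_of_mem_erase hb) h.symm
      have hdisj : Disjoint b0.cells b.cells := hd hb0B hbB hne'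
      rw [disjoint_cells_iff] at hdisj
      have h1 := hw b hbB
      have h2 := hh b hbB
      have h3 := hmin b hbB
      rw [hb0] at hdisj
      simp only at hdisj
      omega
    have hxcols : ∀ x : ℤ, (∃ b ∈ B', x ∈ b.colsSet) → a + k ≤ x := by
      rintro x ⟨b, hb, hx⟩
      rw [mem_colsSet] at hx
      have := hfar b hb
      omega
    have hconv' : ∀ x y z : ℤ, (∃ b ∈ B', x ∈ b.colsSet) → (∃ b ∈ B', z ∈ b.colsSet) →
        x ≤ y → y ≤ z → ∃ b ∈ B', y ∈ b.colsSet := by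
      intro x y z hx hz hxy hyz
      have hxk := hxcols x hx
      obtain ⟨bx, hbx, hxx⟩ := hx
      obtain ⟨bz, hbz, hzz⟩ := hz
      obtain ⟨b, hbB, hby⟩ := hconv x y z ⟨bx, hB'sub hbx, hxx⟩ ⟨bz, hB'sub hbz, hzz⟩ hxy hyz
      refine ⟨b, ?_, hby⟩
      rw [hB', Finset.mem_erase]
      refine ⟨?_, hbB⟩
      intro hbb0
      rw [hbb0, hb0, mem_colsSet] at hby
      simp only at hby
      omega
    obtain ⟨a', hstd⟩ := ih B' hB'card (fun b hb => hw b (hB'sub hb))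
      (fun b hb => hh b (hB'sub hb)) (hd.mono (Finset.coe_subset.2 hB'sub)) hconv'
    have hBeq : B = insert b0 B' := by
      rw [hB', Finset.insert_erase hb0B]
    cases n with
    | zero =>
      refine ⟨a, ?_⟩
      have hBe : B' = ∅ := Finset.card_eq_zero.1 hB'card
      rw [hBeq, hBe, hb0, stdRow_one]
      rfl
    | succ m =>
      have ha'mem : (⟨a', 0, k⟩ : Blk) ∈ B' := by
        rw [hstd, mem_stdRow]
        exact ⟨0, by omega, by simp⟩
      have ha'ge : a + k ≤ a' := hfar _ ha'mem
      have hak : ∃ b ∈ B, (a + k : ℤ) ∈ b.colsSet := by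
        apply hconv a (a + k) a'
        · refine ⟨b0, hb0B, ?_⟩
          rw [hb0, mem_colsSet]
          simp only
          omega
        · refine ⟨_, hB'sub ha'mem, ?_⟩
          rw [mem_colsSet]
          simp only
          omega
        · omega
        · omega
      obtain ⟨b, hbB, hbak⟩ := hak
      have hbne : b ≠ b0 := by
        intro h
        rw [h, hb0, mem_colsSet] at hbak
        simp only at hbak
        omega
      have hbB' : b ∈ B' := Finset.mem_erase.2 ⟨hbne, hbB⟩
      have hble : a' ≤ a + k := by
        rw [hstd, mem_stdRow] at hbB'
        obtain ⟨j, hj, rfl⟩ := hbB'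
        rw [mem_colsSet] at hbak
        simp only at hbak
        have hj0 : (0:ℤ) ≤ (j:ℤ) * k := by positivity
        omega
      have ha' : a' = a + k := le_antisymm hble ha'ge
      refine ⟨a, ?_⟩
      rw [hBeq, hb0, hstd, ha']
      conv_rhs => rw [stdRow_succ, stdRow_succ]
      rw [stdRow_succ]



def ush (a : ℤ) (b : Blk) : Blk := ⟨b.left + a, b.height + 1, b.width⟩
def dsh (a : ℤ) (b : Blk) : Blk := ⟨b.left - a, b.height - 1, b.width⟩

lemma ush_injective (a : ℤ) : Function.Injective (ush a) := by
  intro b b' h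
  cases b; cases b'
  simp only [ush, Blk.mk.injEq] at h
  simp only [Blk.mk.injEq]
  omega

def recompose (k : ℕ) (a : ℤ) (i : ℕ) (T' : Finset Blk) : Finset Blk :=
  stdRow k a i ∪ T'.image (ush a)

lemma mem_recompose {k : ℕ} {a : ℤ} {i : ℕ} {T' : Finset Blk} {b : Blk} :
    b ∈ recompose k a i T' ↔ b ∈ stdRow k a i ∨ ∃ c ∈ T', b = ush a c := by
  simp [recompose, eq_comm]

lemma colsAt_recompose_zero {k : ℕ} (hk : 1 ≤ k) (a : ℤ) (i : ℕ) (T' : Finset Blk) :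
    colsAt (recompose k a i T') 0 = Set.Ico a (a + (i : ℤ) * k) := by
  have hk0 : (0:ℤ) < k := by exact_mod_cast hk
  ext x
  simp only [colsAt, Set.mem_setOf_eq, Set.mem_Ico]
  constructor
  · rintro ⟨b, hb, hh, hx⟩
    rw [mem_recompose] at hb
    rcases hb with hb | ⟨c, _, rfl⟩
    · rw [mem_stdRow] at hb
      obtain ⟨j, hj, rfl⟩ := hb
      rw [mem_colsSet] at hx
      simp only at hx
      have h1 : (0:ℤ) ≤ (j:ℤ) * k := by positivity
      have h2 : ((j:ℤ) + 1) * k ≤ (i:ℤ) * k := by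
        have : (j:ℤ) + 1 ≤ i := by exact_mod_cast hj
        exact mul_le_mul_of_nonneg_right this (by positivity)
      constructor
      · linarith
      · linarith [h2]
    · simp [ush] at hh
  · rintro ⟨h1, h2⟩
    have hdm := Int.mul_ediv_add_emod (x - a) (k : ℤ)
    have hr0 : 0 ≤ (x - a) % (k : ℤ) := Int.emod_nonneg _ (by exact_mod_cast Nat.one_le_iff_ne_zero.1 hk)
    have hrk : (x - a) % (k : ℤ) < k := Int.emod_lt_of_pos _ hk0
    set q := (x - a) / (k : ℤ) with hq
    have hq0 : 0 ≤ q := Int.ediv_nonneg (by omega) (by omega)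
    have hqk : (k:ℤ) * q ≤ x - a := by omega
    have hqi : q < i := by
      have hlt : (k:ℤ) * q < k * i := by
        have : (x:ℤ) - a < (i:ℤ) * k := by linarith
        linarith [mul_comm (i:ℤ) (k:ℤ)]
      exact lt_of_mul_lt_mul_left hlt (le_of_lt hk0)
    refine ⟨⟨a + q * k, 0, k⟩, ?_, rfl, ?_⟩
    · rw [mem_recompose]
      left
      rw [mem_stdRow]
      refine ⟨q.toNat, ?_, ?_⟩
      · omega
      · congr 1
        rw [Int.toNat_of_nonneg hq0]
    · rw [mem_colsSet]
      simp only
      constructor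
      · linarith [mul_comm q (k:ℤ)]
      · have : x - a < k * q + k := by omega
        linarith [mul_comm q (k:ℤ)]

lemma colsAt_recompose_succ {k : ℕ} (a : ℤ) (i : ℕ) (T' : Finset Blk) (h : ℕ) :
    colsAt (recompose k a i T') (h + 1) = {x | x - a ∈ colsAt T' h} := by
  ext x
  simp only [colsAt, Set.mem_setOf_eq]
  constructor
  · rintro ⟨b, hb, hh, hx⟩
    rw [mem_recompose] at hb
    rcases hb with hb | ⟨c, hc, rfl⟩
    · rw [mem_stdRow] at hb
      obtain ⟨j, _, rfl⟩ := hb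
      simp at hh
    · refine ⟨c, hc, ?_, ?_⟩
      · simp only [ush] at hh
        omega
      · rw [mem_colsSet] at hx ⊢
        simp only [ush] at hx
        omega
  · rintro ⟨c, hc, hch, hx⟩
    refine ⟨ush a c, ?_, ?_, ?_⟩
    · rw [mem_recompose]; exact Or.inr ⟨c, hc, rfl⟩
    · simp only [ush]; omega
    · rw [mem_colsSet] at hx ⊢
      simp only [ush]
      omega

lemma recompose_spec {k ℓ i : ℕ} {a : ℤ} {T' : Finset Blk}
    (hk : 2 ≤ k) (hℓ : 1 ≤ ℓ) (hi1 : 1 ≤ i) (hiℓ : i ≤ ℓ + 1)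
    (ha1 : 1 - (k : ℤ) ≤ a) (ha2 : a ≤ ((ℓ : ℤ) + 1 - i) * k - 1)
    (hT' : IsPlatformRC k i T') :
    IsPlatformRC k ℓ (recompose k a i T') ∧
      (recompose k a i T').card = i + T'.card := by
  obtain ⟨hw', hd', hs', hr', hp'⟩ := hT'
  have hk1 : 1 ≤ k := by omega
  have hk0 : (0:ℤ) < k := by exact_mod_cast hk1
  constructor
  · refine ⟨?_, ?_, ?_, ?_, ?_⟩
    · -- widths
      intro b hb
      rw [mem_recompose] at hb
      rcases hb with hb | ⟨c, hc, rfl⟩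
      · rw [mem_stdRow] at hb; obtain ⟨j, _, rfl⟩ := hb; rfl
      · exact hw' c hc
    · -- disjointCells
      intro b hb b' hb' hne
      simp only [Finset.mem_coe, mem_recompose] at hb hb'
      rcases hb with hb | ⟨c, hc, rfl⟩ <;> rcases hb' with hb' | ⟨c', hc', rfl⟩
      · rw [mem_stdRow] at hb hb'
        obtain ⟨j, hj, rfl⟩ := hb
        obtain ⟨j', hj', rfl⟩ := hb'
        have hjj : j ≠ j' := by rintro rfl; exact hne rfl
        rw [disjoint_cells_iff]
        right; right; right
        simp only
        rcases lt_or_gt_of_ne hjj with hlt | hlt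
        · left
          have : ((j:ℤ) + 1) * k ≤ (j':ℤ) * k := by
            have : (j:ℤ) + 1 ≤ j' := by exact_mod_cast hlt
            exact mul_le_mul_of_nonneg_right this (le_of_lt hk0)
          linarith
        · right
          have : ((j':ℤ) + 1) * k ≤ (j:ℤ) * k := by
            have : (j':ℤ) + 1 ≤ j := by exact_mod_cast hlt
            exact mul_le_mul_of_nonneg_right this (le_of_lt hk0)
          linarith
      · rw [disjoint_cells_iff]
        left
        rw [mem_stdRow] at hb
        obtain ⟨j, _, rfl⟩ := hb
        simp [ush]
      · rw [disjoint_cells_iff]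
        left
        rw [mem_stdRow] at hb'
        obtain ⟨j, _, rfl⟩ := hb'
        simp [ush]
      · have hcc : c ≠ c' := by rintro rfl; exact hne rfl
        have hdisj : Disjoint c.cells c'.cells := hd' hc hc' hcc
        rw [disjoint_cells_iff] at hdisj ⊢
        simp only [ush]
        omega
    · -- supported
      intro b hb h hbh
      rw [mem_recompose] at hb
      rcases hb with hb | ⟨c, hc, rfl⟩
      · rw [mem_stdRow] at hb; obtain ⟨j, _, rfl⟩ := hb; simp at hbh
      · simp only [ush] at hbh
        have hch : c.height = h := by omega
        cases h with
        | zero =>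
          obtain ⟨x, hxc, hx0, hxi⟩ := hp' c hc hch
          have hmem : (x + a) ∈ colsAt (recompose k a i T') 0 := by
            rw [colsAt_recompose_zero hk1]
            constructor
            · omega
            · omega
          obtain ⟨b', hb', hbh', hxb'⟩ := hmem
          refine ⟨b', hb', hbh', x + a, ?_, hxb'⟩
          rw [mem_colsSet] at hxc ⊢
          simp only [ush]
          omega
        | succ h' =>
          obtain ⟨d, hd, hdh, x, hx1, hx2⟩ := hs' c hc h' hch
          refine ⟨ush a d, ?_, ?_, x + a, ?_, ?_⟩
          · rw [mem_recompose]; exact Or.inr ⟨d, hd, rfl⟩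
          · simp only [ush]; omega
          · rw [mem_colsSet] at hx1 ⊢; simp only [ush]; omega
          · rw [mem_colsSet] at hx2 ⊢; simp only [ush]; omega
    · -- rowConvex
      intro h x y z hx hz hxy hyz
      cases h with
      | zero =>
        rw [colsAt_recompose_zero hk1] at hx hz ⊢
        rw [Set.mem_Ico] at hx hz ⊢
        omega
      | succ h' =>
        rw [colsAt_recompose_succ] at hx hz ⊢
        exact hr' h' (x - a) (y - a) (z - a) hx hz (by omega) (by omega)
    · -- platform
      intro b hb hbh
      rw [mem_recompose] at hb
      rcases hb with hb | ⟨c, hc, rfl⟩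
      · rw [mem_stdRow] at hb
        obtain ⟨j, hj, rfl⟩ := hb
        have h1 : (0:ℤ) ≤ (j:ℤ) * k := by positivity
        have h2 : (j:ℤ) * k ≤ ((i:ℤ) - 1) * k := by
          have : (j:ℤ) ≤ (i:ℤ) - 1 := by
            have : (j:ℤ) + 1 ≤ i := by exact_mod_cast hj
            omega
          exact mul_le_mul_of_nonneg_right this (le_of_lt hk0)
        have e1 : ((ℓ:ℤ) + 1 - i) * k + ((i:ℤ) - 1) * k = (ℓ:ℤ) * k := by ring
        have hlk : (0:ℤ) < (ℓ:ℤ) * k := by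
          have : (1:ℤ) ≤ ℓ := by exact_mod_cast hℓ
          nlinarith
        rcases le_total 0 (a + (j:ℤ) * k) with hc | hc
        · refine ⟨a + (j:ℤ) * k, ?_, hc, ?_⟩
          · rw [mem_colsSet]; simp only; omega
          · linarith
        · refine ⟨0, ?_, le_refl 0, hlk⟩
          rw [mem_colsSet]; simp only
          constructor
          · exact hc
          · linarith
      · simp [ush] at hbh
  · -- cardinality
    rw [recompose, Finset.card_union_of_disjoint, card_stdRow hk1,
      Finset.card_image_of_injective _ (ush_injective a)]
    rw [Finset.disjoint_left]
    intro b hb hb'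
    rw [mem_stdRow] at hb
    obtain ⟨j, _, rfl⟩ := hb
    rw [Finset.mem_image] at hb'
    obtain ⟨c, _, hc⟩ := hb'
    simp [ush] at hc

lemma ground_exists {T : Finset Blk} (hs : supported T) :
    ∀ (h : ℕ) (b : Blk), b ∈ T → b.height = h → ∃ b₀ ∈ T, b₀.height = 0 := by
  intro h
  induction h with
  | zero => exact fun b hb hh => ⟨b, hb, hh⟩
  | succ h ih =>
    intro b hb hh
    obtain ⟨b', hb', hbh', _⟩ := hs b hb h hh
    exact ih b' hb' hbh'

lemma dsh_injOn {a : ℤ} {R : Finset Blk} (hR : ∀ b ∈ R, b.height ≠ 0) :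
    Set.InjOn (dsh a) R := by
  intro b hb b' hb' h
  have h1 := hR b hb
  have h2 := hR b' hb'
  cases b; cases b'
  simp only [dsh, Blk.mk.injEq] at h
  simp only at h1 h2
  simp only [Blk.mk.injEq]
  omega

lemma colsAt_dsh {T : Finset Blk} {a : ℤ} (h : ℕ) :
    colsAt ((T.filter fun b => ¬ b.height = 0).image (dsh a)) h
      = {x | x + a ∈ colsAt T (h + 1)} := by
  ext x
  simp only [colsAt, Set.mem_setOf_eq]
  constructor
  · rintro ⟨b'', hb'', hbh, hx⟩
    rw [Finset.mem_image] at hb''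
    obtain ⟨b, hb, rfl⟩ := hb''
    rw [Finset.mem_filter] at hb
    obtain ⟨hbT, hb0⟩ := hb
    refine ⟨b, hbT, ?_, ?_⟩
    · simp only [dsh] at hbh; omega
    · rw [mem_colsSet] at hx ⊢
      simp only [dsh] at hx
      omega
  · rintro ⟨b, hbT, hbh, hx⟩
    refine ⟨dsh a b, ?_, ?_, ?_⟩
    · rw [Finset.mem_image]
      exact ⟨b, Finset.mem_filter.2 ⟨hbT, by omega⟩, rfl⟩
    · simp only [dsh]; omega
    · rw [mem_colsSet] at hx ⊢
      simp only [dsh]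
      omega

lemma decompose {k ℓ n : ℕ} (hk : 2 ≤ k) (hℓ : 1 ≤ ℓ) (hn : 1 ≤ n)
    {T : Finset Blk} (hT : IsPlatformRC k ℓ T) (hc : T.card = n) :
    ∃ (i : ℕ) (a : ℤ) (T' : Finset Blk),
      1 ≤ i ∧ i ≤ ℓ + 1 ∧ i ≤ n ∧
      1 - (k : ℤ) ≤ a ∧ a ≤ ((ℓ : ℤ) + 1 - i) * k - 1 ∧
      IsPlatformRC k i T' ∧ T'.card = n - i ∧
      T = recompose k a i T' := by
  obtain ⟨hw, hd, hs, hr, hp⟩ := hT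
  have hk1 : 1 ≤ k := by omega
  have hk0 : (0:ℤ) < k := by exact_mod_cast hk1
  set B := T.filter (fun b => b.height = 0) with hB
  set R := T.filter (fun b => ¬ b.height = 0) with hR
  have hBsub : B ⊆ T := Finset.filter_subset _ _
  have hRsub : R ⊆ T := Finset.filter_subset _ _
  have hBR : B.card + R.card = n := by
    rw [hB, hR, Finset.card_filter_add_card_filter_not, hc]
  set i := B.card with hi
  -- B is a standard row
  have hBcols : ∀ x : ℤ, (∃ b ∈ B, x ∈ b.colsSet) ↔ x ∈ colsAt T 0 := by
    intro x
    simp only [colsAt, Set.mem_setOf_eq, hB, Finset.mem_filter]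
    constructor
    · rintro ⟨b, ⟨h1, h2⟩, h3⟩; exact ⟨b, h1, h2, h3⟩
    · rintro ⟨b, h1, h2, h3⟩; exact ⟨b, ⟨h1, h2⟩, h3⟩
  obtain ⟨a, hstd⟩ := row_structure k hk1 i B rfl
    (fun b hb => hw b (hBsub hb))
    (fun b hb => (Finset.mem_filter.1 hb).2)
    (hd.mono (Finset.coe_subset.2 hBsub))
    (by
      intro x y z hx hz hxy hyz
      rw [hBcols] at hx hz ⊢
      exact hr 0 x y z hx hz hxy hyz)
  -- B is nonempty
  have hi1 : 1 ≤ i := by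
    have hTne : T.Nonempty := Finset.card_pos.1 (by omega)
    obtain ⟨b, hb⟩ := hTne
    obtain ⟨b₀, hb₀, hb₀h⟩ := ground_exists hs b.height b hb rfl
    have : b₀ ∈ B := Finset.mem_filter.2 ⟨hb₀, hb₀h⟩
    rw [hi]
    exact Finset.card_pos.2 ⟨b₀, this⟩
  have hin : i ≤ n := by
    rw [hi, ← hBR]; omega
  have hmemB : ∀ j, j < i → (⟨a + (j:ℤ) * k, 0, k⟩ : Blk) ∈ B := by
    intro j hj
    rw [hstd, mem_stdRow]
    exact ⟨j, hj, rfl⟩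
  -- bounds on a
  have ha1 : 1 - (k : ℤ) ≤ a := by
    obtain ⟨x, hxc, hx0, _⟩ := hp _ (hBsub (hmemB 0 hi1)) rfl
    rw [mem_colsSet] at hxc
    simp only [Nat.cast_zero, zero_mul, add_zero] at hxc
    omega
  have ha2 : a ≤ ((ℓ : ℤ) + 1 - i) * k - 1 := by
    obtain ⟨x, hxc, _, hxl⟩ := hp _ (hBsub (hmemB (i - 1) (by omega))) rfl
    rw [mem_colsSet] at hxc
    simp only at hxc
    have hcast : ((i - 1 : ℕ) : ℤ) = (i : ℤ) - 1 := by
      rw [Nat.cast_sub hi1]; norm_num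
    rw [hcast] at hxc
    have e1 : ((ℓ:ℤ) + 1 - i) * k - 1 = (ℓ:ℤ) * k - 1 - ((i:ℤ) - 1) * k := by ring
    rw [e1]
    linarith [hxc.1, hxl]
  have hiℓ : i ≤ ℓ + 1 := by
    by_contra hcon
    push_neg at hcon
    have h1 : ((ℓ:ℤ) + 1) ≤ (i:ℤ) - 1 := by
      have : (ℓ:ℤ) + 2 ≤ i := by exact_mod_cast hcon
      omega
    have h2 : ((ℓ:ℤ) + 1) * k ≤ ((i:ℤ) - 1) * k := mul_le_mul_of_nonneg_right h1 (le_of_lt hk0)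
    have e1 : ((ℓ:ℤ) + 1 - i) * k = (ℓ:ℤ) * k + k - ((i:ℤ) - 1) * k - k := by ring
    nlinarith
  -- the upper part
  set T' := R.image (dsh a) with hT'
  have hRh : ∀ b ∈ R, b.height ≠ 0 := fun b hb => (Finset.mem_filter.1 hb).2
  have hT'card : T'.card = n - i := by
    rw [hT', Finset.card_image_of_injOn (dsh_injOn hRh)]
    omega
  have hT'mem : ∀ b'' : Blk, b'' ∈ T' ↔ ∃ b ∈ R, b'' = dsh a b := by
    intro b''
    simp [hT', eq_comm]
  refine ⟨i, a, T', hi1, hiℓ, hin, ha1, ha2, ⟨?_, ?_, ?_, ?_, ?_⟩, hT'card, ?_⟩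
  · -- widths
    intro b'' hb''
    obtain ⟨b, hb, rfl⟩ := (hT'mem b'').1 hb''
    exact hw b (hRsub hb)
  · -- disjointCells
    intro x hx y hy hne
    rw [Finset.mem_coe, hT'mem] at hx hy
    obtain ⟨b, hb, rfl⟩ := hx
    obtain ⟨b', hb', rfl⟩ := hy
    have hbb : b ≠ b' := fun h => hne (by rw [h])
    have hdisj : Disjoint b.cells b'.cells := hd (hRsub hb) (hRsub hb') hbb
    rw [disjoint_cells_iff] at hdisj ⊢
    have h1 := hRh b hb
    have h2 := hRh b' hb'
    simp only [dsh]
    omega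
  · -- supported
    intro b'' hb'' h hbh
    obtain ⟨b, hb, rfl⟩ := (hT'mem b'').1 hb''
    have hbheight : b.height = h + 2 := by
      have := hRh b hb
      simp only [dsh] at hbh
      omega
    obtain ⟨d, hdT, hdh, x, hx1, hx2⟩ := hs b (hRsub hb) (h + 1) hbheight
    have hdR : d ∈ R := Finset.mem_filter.2 ⟨hdT, by omega⟩
    refine ⟨dsh a d, (hT'mem _).2 ⟨d, hdR, rfl⟩, by simp only [dsh]; omega, x - a, ?_, ?_⟩
    · rw [mem_colsSet] at hx1 ⊢; simp only [dsh]; omega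
    · rw [mem_colsSet] at hx2 ⊢; simp only [dsh]; omega
  · -- rowConvex
    intro h x y z hx hz hxy hyz
    rw [hT', colsAt_dsh] at hx hz ⊢
    exact hr (h + 1) (x + a) (y + a) (z + a) hx hz (by omega) (by omega)
  · -- platform
    intro b'' hb'' hbh
    obtain ⟨b, hb, rfl⟩ := (hT'mem b'').1 hb''
    have hbheight : b.height = 1 := by
      have := hRh b hb
      simp only [dsh] at hbh
      omega
    obtain ⟨d, hdT, hdh, x, hx1, hx2⟩ := hs b (hRsub hb) 0 hbheight
    have hdB : d ∈ B := Finset.mem_filter.2 ⟨hdT, hdh⟩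
    rw [hstd, mem_stdRow] at hdB
    obtain ⟨j, hj, rfl⟩ := hdB
    rw [mem_colsSet] at hx2
    simp only at hx2
    have h1 : (0:ℤ) ≤ (j:ℤ) * k := by positivity
    have h2 : ((j:ℤ) + 1) * k ≤ (i:ℤ) * k := by
      have : (j:ℤ) + 1 ≤ i := by exact_mod_cast hj
      exact mul_le_mul_of_nonneg_right this (le_of_lt hk0)
    refine ⟨x - a, ?_, by linarith, by linarith⟩
    rw [mem_colsSet] at hx1 ⊢
    simp only [dsh]
    omega
  · -- reconstruction
    rw [recompose, ← hstd, hT', Finset.image_image]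
    have himg0 : ∀ b ∈ R, (ush a) (dsh a b) = b := by
      intro b hb
      have := hRh b hb
      cases b
      simp only [dsh, ush, Blk.mk.injEq, and_true]
      simp only at this
      omega
    have himg : R.image ((ush a) ∘ (dsh a)) = R := by
      have heq : R.image ((ush a) ∘ (dsh a)) = R.image id :=
        Finset.image_congr (fun b hb => by
          simp only [Function.comp_apply, id_eq]
          exact himg0 b (by simpa using hb))
      rw [heq, Finset.image_id]
    rw [himg, hB, hR, Finset.filter_union_filter_not_eq]

lemma recompose_filter_zero {k i : ℕ} {a : ℤ} {T' : Finset Blk} :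
    (recompose k a i T').filter (fun b => b.height = 0) = stdRow k a i := by
  ext b
  simp only [Finset.mem_filter, mem_recompose]
  constructor
  · rintro ⟨hb | ⟨c, hc, rfl⟩, hh⟩
    · exact hb
    · simp [ush] at hh
  · intro hb
    refine ⟨Or.inl hb, ?_⟩
    rw [mem_stdRow] at hb
    obtain ⟨j, _, rfl⟩ := hb
    rfl

lemma recompose_filter_ne {k i : ℕ} {a : ℤ} {T' : Finset Blk} :
    (recompose k a i T').filter (fun b => ¬ b.height = 0) = T'.image (ush a) := by
  ext b
  simp only [Finset.mem_filter, mem_recompose, Finset.mem_image]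
  constructor
  · rintro ⟨hb | ⟨c, hc, rfl⟩, hh⟩
    · rw [mem_stdRow] at hb
      obtain ⟨j, _, rfl⟩ := hb
      exact absurd rfl hh
    · exact ⟨c, hc, rfl⟩
  · rintro ⟨c, hc, rfl⟩
    exact ⟨Or.inr ⟨c, hc, rfl⟩, by simp [ush]⟩

lemma stdRow_inj {k : ℕ} (hk : 1 ≤ k) {a a' : ℤ} {i : ℕ} (hi : 1 ≤ i)
    (h : stdRow k a i = stdRow k a' i) : a = a' := by
  have hk0 : (0:ℤ) < k := by exact_mod_cast hk
  have h1 : (⟨a, 0, k⟩ : Blk) ∈ stdRow k a' i := by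
    rw [← h, mem_stdRow]
    exact ⟨0, hi, by simp⟩
  have h2 : (⟨a', 0, k⟩ : Blk) ∈ stdRow k a i := by
    rw [h, mem_stdRow]
    exact ⟨0, hi, by simp⟩
  rw [mem_stdRow] at h1 h2
  obtain ⟨j1, _, he1⟩ := h1
  obtain ⟨j2, _, he2⟩ := h2
  simp only [Blk.mk.injEq, and_true] at he1 he2
  have p1 : (0:ℤ) ≤ (j1:ℤ) * k := by positivity
  have p2 : (0:ℤ) ≤ (j2:ℤ) * k := by positivity
  omega

def TargetT (k ℓ n : ℕ) : Type :=
  Σ i : {x : ℕ // x ∈ Finset.Icc 1 (min (ℓ + 1) n)},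
    {a : ℤ // a ∈ Finset.Icc (1 - (k:ℤ)) (((ℓ:ℤ) + 1 - (i : ℕ)) * k - 1)} ×
    {T : Finset Blk // IsPlatformRC k (i : ℕ) T ∧ T.card = n - (i : ℕ)}

def gmap (k ℓ n : ℕ) (hk : 2 ≤ k) (hℓ : 1 ≤ ℓ) :
    TargetT k ℓ n → {T : Finset Blk // IsPlatformRC k ℓ T ∧ T.card = n} :=
  fun p =>
    ⟨recompose k p.2.1.1 p.1.1 p.2.2.1, by
      obtain ⟨⟨i, hiS⟩, ⟨a, haA⟩, ⟨T', hT'⟩⟩ := p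
      have hi1 : 1 ≤ i := (Finset.mem_Icc.1 hiS).1
      have hi2 : i ≤ min (ℓ + 1) n := (Finset.mem_Icc.1 hiS).2
      have ha1 : 1 - (k:ℤ) ≤ a := (Finset.mem_Icc.1 haA).1
      have ha2 : a ≤ ((ℓ:ℤ) + 1 - i) * k - 1 := (Finset.mem_Icc.1 haA).2
      have hrc : IsPlatformRC k i T' := hT'.1
      have hcard : T'.card = n - i := hT'.2
      have hspec := recompose_spec hk hℓ hi1
        (le_trans hi2 (min_le_left _ _)) ha1 ha2 hrc
      show IsPlatformRC k ℓ (recompose k a i T') ∧ (recompose k a i T').card = n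
      refine ⟨hspec.1, ?_⟩
      rw [hspec.2, hcard]
      have := le_trans hi2 (min_le_right _ _)
      omega⟩

lemma gmap_bijective (k ℓ n : ℕ) (hk : 2 ≤ k) (hℓ : 1 ≤ ℓ) (hn : 1 ≤ n) :
    Function.Bijective (gmap k ℓ n hk hℓ) := by
  have hk1 : 1 ≤ k := by omega
  constructor
  · rintro ⟨⟨i, hiS⟩, ⟨a, haA⟩, ⟨T1, hT1⟩⟩ ⟨⟨i', hiS'⟩, ⟨a', haA'⟩, ⟨T2, hT2⟩⟩ h
    have heq : recompose k a i T1 = recompose k a' i' T2 := congrArg Subtype.val h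
    have hstd : stdRow k a i = stdRow k a' i' := by
      rw [← recompose_filter_zero (k := k) (i := i) (a := a) (T' := T1),
        ← recompose_filter_zero (k := k) (i := i') (a := a') (T' := T2), heq]
    have hii : i = i' := by
      have := congrArg Finset.card hstd
      rwa [card_stdRow hk1, card_stdRow hk1] at this
    subst hii
    have hi1 : 1 ≤ i := (Finset.mem_Icc.1 hiS).1
    have haa : a = a' := stdRow_inj hk1 hi1 hstd
    subst haa
    have himg : T1.image (ush a) = T2.image (ush a) := by
      rw [← recompose_filter_ne (k := k) (i := i) (a := a) (T' := T1),
        ← recompose_filter_ne (k := k) (i := i) (a := a) (T' := T2), heq]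
    have hTT : T1 = T2 := Finset.image_injective (ush_injective a) himg
    subst hTT
    rfl
  · rintro ⟨T, hT, hc⟩
    obtain ⟨i, a, T', hi1, hiℓ, hin, ha1, ha2, hT', hT'card, hTeq⟩ :=
      decompose hk hℓ hn hT hc
    refine ⟨⟨⟨i, Finset.mem_Icc.2 ⟨hi1, le_min hiℓ hin⟩⟩,
      ⟨a, Finset.mem_Icc.2 ⟨ha1, ha2⟩⟩, ⟨T', hT', hT'card⟩⟩, ?_⟩
    exact Subtype.ext hTeq.symm

lemma tw_finite (k : ℕ) (hk : 2 ≤ k) :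
    ∀ n ℓ : ℕ, 1 ≤ ℓ → Finite {T : Finset Blk // IsPlatformRC k ℓ T ∧ T.card = n} := by
  intro n
  induction n using Nat.strong_induction_on with
  | _ n ih =>
    intro ℓ hℓ
    rcases Nat.eq_zero_or_pos n with rfl | hn
    · haveI : Subsingleton {T : Finset Blk // IsPlatformRC k ℓ T ∧ T.card = 0} := by
        constructor
        rintro ⟨T, _, h1⟩ ⟨T', _, h2⟩
        apply Subtype.ext
        simp only
        rw [Finset.card_eq_zero.1 h1, Finset.card_eq_zero.1 h2]
      exact Finite.of_subsingleton
    · haveI hfin : ∀ i : {x : ℕ // x ∈ Finset.Icc 1 (min (ℓ + 1) n)},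
          Finite {T : Finset Blk // IsPlatformRC k (i : ℕ) T ∧ T.card = n - (i : ℕ)} := by
        rintro ⟨i, hi⟩
        rw [Finset.mem_Icc] at hi
        exact ih (n - i) (by omega) i hi.1
      haveI : Finite (TargetT k ℓ n) := by
        unfold TargetT
        infer_instance
      exact Finite.of_surjective (gmap k ℓ n hk hℓ) (gmap_bijective k ℓ n hk hℓ hn).2

lemma nat_card_sigma {ι : Type*} [Fintype ι] {β : ι → Type*} [hf : ∀ i, Finite (β i)] :
    Nat.card (Σ i, β i) = ∑ i, Nat.card (β i) := by
  haveI : ∀ i, Fintype (β i) := fun i => Fintype.ofFinite _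
  rw [Nat.card_eq_fintype_card, Fintype.card_sigma]
  exact Finset.sum_congr rfl fun i _ => (Nat.card_eq_fintype_card).symm

lemma card_A {k ℓ i : ℕ} (hk : 1 ≤ k) (hi : i ≤ ℓ + 1) :
    (Finset.Icc (1 - (k:ℤ)) (((ℓ:ℤ) + 1 - i) * k - 1)).card = (ℓ + 2 - i) * k - 1 := by
  rw [Int.card_Icc]
  have h1 : ((ℓ:ℤ) + 1 - i) = ((ℓ + 1 - i : ℕ) : ℤ) := by omega
  set m := ℓ + 1 - i with hm
  have hle : 1 ≤ m * k + k := le_trans hk (Nat.le_add_left k (m * k))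
  have h2 : ((ℓ:ℤ) + 1 - i) * k - 1 + 1 - (1 - k) = ((m * k + k - 1 : ℕ) : ℤ) := by
    rw [h1]
    push_cast [Nat.cast_sub hle]
    ring
  rw [h2, Int.toNat_natCast]
  have h3 : ℓ + 2 - i = m + 1 := by omega
  rw [h3, add_mul, one_mul]

end RC

/-- For all `ℓ ≥ 1` and `n ≥ 1`:
`f_ℓ(n) = Σ_{i=1}^{ℓ+1} ((ℓ + 2 − i)k − 1) · f_i(n − i)`, where `f_i(n − i)` is
interpreted as `0` when `n − i < 0` (and `f_i(0) = 1`). -/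
theorem rowconvex_recurrence (k : ℕ) (hk : 2 ≤ k) (ℓ : ℕ) (hℓ : 1 ≤ ℓ)
    (n : ℕ) (hn : 1 ≤ n) :
    fPlatform k ℓ n =
      ∑ i ∈ Finset.Icc 1 (ℓ + 1),
        ((ℓ + 2 - i) * k - 1) * (if i ≤ n then fPlatform k i (n - i) else 0) := by
  classical
  have hk1 : 1 ≤ k := by omega
  haveI hfinTw : ∀ i : {x : ℕ // x ∈ Finset.Icc 1 (min (ℓ + 1) n)},
      Finite {T : Finset Blk // IsPlatformRC k (i : ℕ) T ∧ T.card = n - (i : ℕ)} :=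
    fun i => RC.tw_finite k hk (n - i) i (Finset.mem_Icc.1 i.2).1
  haveI hfib : ∀ i : {x : ℕ // x ∈ Finset.Icc 1 (min (ℓ + 1) n)},
      Finite ({a : ℤ // a ∈ Finset.Icc (1 - (k:ℤ)) (((ℓ:ℤ) + 1 - (i : ℕ)) * k - 1)} ×
        {T : Finset Blk // IsPlatformRC k (i : ℕ) T ∧ T.card = n - (i : ℕ)}) :=
    fun i => by haveI := hfinTw i; infer_instance
  have step1 : fPlatform k ℓ n = Nat.card (RC.TargetT k ℓ n) :=
    Nat.card_congr (Equiv.ofBijective _ (RC.gmap_bijective k ℓ n hk hℓ hn)).symm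
  have step2 : Nat.card (RC.TargetT k ℓ n) =
      ∑ i : {x : ℕ // x ∈ Finset.Icc 1 (min (ℓ + 1) n)},
        Nat.card ({a : ℤ // a ∈ Finset.Icc (1 - (k:ℤ)) (((ℓ:ℤ) + 1 - (i : ℕ)) * k - 1)} ×
          {T : Finset Blk // IsPlatformRC k (i : ℕ) T ∧ T.card = n - (i : ℕ)}) := by
    unfold RC.TargetT
    exact RC.nat_card_sigma
  have step3 : ∀ i : {x : ℕ // x ∈ Finset.Icc 1 (min (ℓ + 1) n)},
      Nat.card ({a : ℤ // a ∈ Finset.Icc (1 - (k:ℤ)) (((ℓ:ℤ) + 1 - (i : ℕ)) * k - 1)} ×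
        {T : Finset Blk // IsPlatformRC k (i : ℕ) T ∧ T.card = n - (i : ℕ)}) =
      ((ℓ + 2 - (i : ℕ)) * k - 1) * fPlatform k (i : ℕ) (n - (i : ℕ)) := by
    intro i
    haveI := hfinTw i
    rw [Nat.card_prod, Nat.card_eq_finsetCard,
      RC.card_A hk1 (le_trans (Finset.mem_Icc.1 i.2).2 (min_le_left _ _))]
    rfl
  rw [step1, step2]
  rw [Finset.sum_congr rfl (fun i _ => step3 i)]
  rw [Finset.sum_coe_sort (Finset.Icc 1 (min (ℓ + 1) n))
    (fun i => ((ℓ + 2 - i) * k - 1) * fPlatform k i (n - i))]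
  have hcongr : ∑ i ∈ Finset.Icc 1 (min (ℓ + 1) n),
      ((ℓ + 2 - i) * k - 1) * fPlatform k i (n - i) =
      ∑ i ∈ Finset.Icc 1 (min (ℓ + 1) n),
      ((ℓ + 2 - i) * k - 1) * (if i ≤ n then fPlatform k i (n - i) else 0) := by
    refine Finset.sum_congr rfl fun i hi => ?_
    rw [Finset.mem_Icc] at hi
    rw [if_pos (le_trans hi.2 (min_le_right _ _))]
  rw [hcongr]
  refine Finset.sum_subset (Finset.Icc_subset_Icc_right (min_le_left _ _)) ?_
  intro i hi hnot
  rw [Finset.mem_Icc] at hi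
  rw [Finset.mem_Icc] at hnot
  have : ¬ i ≤ n := by omega
  rw [if_neg this, mul_zero]
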